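/- arXiv:2206.06234 — 2 statements merged into one kernel-verified Lean document; each statement's English description precedes it below -/
import Mathlib

section
/- For integers a,b,c,d with 4 < a < c < d < b and a+b = c+d, the graphs C_{a,b} and C_{c,d} are distinguished by the Weisfeiler-Lehman color refinement test: after a rounds of refinement starting from initial colors given by degrees, the multisets of vertex colors of the two graphs differ. -/
/-- Adjacency relation of a cycle on `Fin n`. -/
def cyc (n : ℕ) (i j : Fin n) : Prop :=
  i ≠ j ∧ ((i.val + 1) % n = j.val ∨ (j.val + 1) % n = i.val)

instance (n : ℕ) : DecidableRel (cyc n) := fun i j => by unfold cyc; infer_instance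

lemma cyc_symm {n : ℕ} {i j : Fin n} (h : cyc n i j) : cyc n j i :=
  ⟨h.1.symm, h.2.symm⟩

/-- Adjacency of `C_{a,b}`: two disjoint cycles joined by a bridge between vertex `0`
of each cycle. -/
def cAdj (a b : ℕ) (u v : Fin a ⊕ Fin b) : Prop :=
  (∃ i j, u = Sum.inl i ∧ v = Sum.inl j ∧ cyc a i j) ∨
  (∃ i j, u = Sum.inr i ∧ v = Sum.inr j ∧ cyc b i j) ∨
  (∃ i j, u = Sum.inl i ∧ v = Sum.inr j ∧ i.val = 0 ∧ j.val = 0) ∨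
  (∃ i j, u = Sum.inr i ∧ v = Sum.inl j ∧ i.val = 0 ∧ j.val = 0)

instance (a b : ℕ) : DecidableRel (cAdj a b) := fun u v => by unfold cAdj; infer_instance

/-- The graph `C_{a,b}`: disjoint cycles of lengths `a` and `b` joined by a single bridge. -/
def Cgraph (a b : ℕ) : SimpleGraph (Fin a ⊕ Fin b) where
  Adj := cAdj a b
  symm := by
    constructor
    intro u v h
    rcases h with ⟨i, j, rfl, rfl, hc⟩ | ⟨i, j, rfl, rfl, hc⟩ |
      ⟨i, j, rfl, rfl, hc⟩ | ⟨i, j, rfl, rfl, hc⟩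
    · exact Or.inl ⟨j, i, rfl, rfl, cyc_symm hc⟩
    · exact Or.inr (Or.inl ⟨j, i, rfl, rfl, cyc_symm hc⟩)
    · exact Or.inr (Or.inr (Or.inr ⟨j, i, rfl, rfl, hc.2, hc.1⟩))
    · exact Or.inr (Or.inr (Or.inl ⟨j, i, rfl, rfl, hc.2, hc.1⟩))
  loopless := by
    constructor
    intro u h
    rcases h with ⟨i, j, h1, h2, hc⟩ | ⟨i, j, h1, h2, hc⟩ |
      ⟨i, j, h1, h2, hc⟩ | ⟨i, j, h1, h2, hc⟩ <;> subst h1 <;> simp_all [cyc]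

instance (a b : ℕ) : DecidableRel (Cgraph a b).Adj :=
  fun u v => inferInstanceAs (Decidable (cAdj a b u v))

/-- Color space of the `k`-th round of 1-WL color refinement (initial colors are
natural numbers, e.g. degrees). -/
def WLType : ℕ → Type
  | 0 => ℕ
  | k + 1 => WLType k × Multiset (WLType k)

/-- 1-WL color refinement, initialized with vertex degrees: at each round the new
color of a vertex is the pair of its old color and the multiset of its
neighbors' old colors. -/
def wl {V : Type*} [Fintype V] [DecidableEq V] (G : SimpleGraph V)
    [DecidableRel G.Adj] : (k : ℕ) → V → WLType k
  | 0 => fun v => G.degree v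
  | k + 1 => fun v => (wl G k v, (G.neighborFinset v).val.map (wl G k))

/-!
In round `k` of color refinement a vertex receives the color `cycleColor k` of a vertex of a
plain cycle exactly when every vertex within distance `k` of it has degree `2`. In `C_{n,m}`
these are the vertices at distance more than `k` from the bridge endpoint of their cycle, so
`cycleColor k` occurs `(n - (2k+1)) + (m - (2k+1))` times (truncated subtraction). Color
refinement only refines, so equal color multisets in round `a` stay equal in round
`k = (a + 1) / 2`. There `2k + 1 > a`, so the `a`-cycle of `C_{a,b}` contributes nothing, and
the count `b - (2k+1)` for `C_{a,b}` exceeds that for `C_{c,d}` although `a + b = c + d`.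
-/

open Finset SimpleGraph

instance WLType.instDecidableEq : (k : ℕ) → DecidableEq (WLType k)
  | 0 => inferInstanceAs (DecidableEq ℕ)
  | k + 1 =>
    letI := WLType.instDecidableEq k
    inferInstanceAs (DecidableEq (WLType k × Multiset (WLType k)))

/-- The color that every vertex of a cycle receives in round `k`. -/
def cycleColor : (k : ℕ) → WLType k
  | 0 => (2 : ℕ)
  | k + 1 => (cycleColor k, Multiset.replicate 2 (cycleColor k))

/-- `D` is the graph distance to the set of vertices whose degree is not `2`. -/
structure IsDistToDegreeNeTwo {V : Type*} [Fintype V] (G : SimpleGraph V) [DecidableRel G.Adj]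
    (D : V → ℕ) : Prop where
  degree_eq_two_iff : ∀ v, G.degree v = 2 ↔ 0 < D v
  le_add_one_of_adj : ∀ v w, G.Adj v w → D v ≤ D w + 1
  exists_adj_lt : ∀ v, 0 < D v → ∃ w, G.Adj v w ∧ D w < D v

section ColorRefinement

variable {V : Type*} [Fintype V] [DecidableEq V] (G : SimpleGraph V) [DecidableRel G.Adj]

lemma degree_eq_two_of_wl_eq_cycleColor {k : ℕ} {v : V} (h : wl G k v = cycleColor k) :
    G.degree v = 2 := by
  induction k with
  | zero => exact h
  | succ k ih => exact ih (Prod.ext_iff.mp h).1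

lemma wl_succ_eq_cycleColor_iff {k : ℕ} {v : V} :
    wl G (k + 1) v = cycleColor (k + 1) ↔
      wl G k v = cycleColor k ∧ ∀ w, G.Adj v w → wl G k w = cycleColor k := by
  change (wl G k v, _) = (cycleColor k, _) ↔ _
  simp only [Prod.mk.injEq, Multiset.eq_replicate, Multiset.card_map,
    Multiset.forall_mem_map_iff, mem_val, mem_neighborFinset]
  exact ⟨fun ⟨hv, _, hw⟩ => ⟨hv, hw⟩,
    fun ⟨hv, hw⟩ => ⟨hv, degree_eq_two_of_wl_eq_cycleColor G hv, hw⟩⟩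

theorem wl_eq_cycleColor_iff {D : V → ℕ} (hD : IsDistToDegreeNeTwo G D) (k : ℕ) (v : V) :
    wl G k v = cycleColor k ↔ k < D v := by
  induction k generalizing v with
  | zero => exact hD.degree_eq_two_iff v
  | succ k ih =>
    simp only [wl_succ_eq_cycleColor_iff, ih]
    constructor
    · rintro ⟨hv, hw⟩
      by_contra! hle
      obtain ⟨w, hvw, hlt⟩ := hD.exists_adj_lt v (by omega)
      have := hw w hvw
      omega
    · exact fun hv => ⟨by omega, fun w hvw => by have := hD.le_add_one_of_adj v w hvw; omega⟩

lemma count_cycleColor_eq_card {D : V → ℕ} (hD : IsDistToDegreeNeTwo G D) (k : ℕ) :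
    (univ.val.map (wl G k)).count (cycleColor k) = #{v | k < D v} := by
  rw [Multiset.count_map, card_def, filter_val]
  congr 1
  exact Multiset.filter_congr fun v _ => by rw [eq_comm, wl_eq_cycleColor_iff G hD]

lemma map_wl_eq_map_fst (k : ℕ) :
    univ.val.map (wl G k) = (univ.val.map (wl G (k + 1))).map Prod.fst :=
  (Multiset.map_map Prod.fst (wl G (k + 1)) _).symm

lemma wl_multiset_eq_of_le {W : Type*} [Fintype W] [DecidableEq W] (H : SimpleGraph W)
    [DecidableRel H.Adj] {k l : ℕ} (hkl : k ≤ l)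
    (h : univ.val.map (wl G l) = univ.val.map (wl H l)) :
    univ.val.map (wl G k) = univ.val.map (wl H k) := by
  induction l, hkl using Nat.le_induction with
  | base => exact h
  | succ m _ ih => exact ih (by rw [map_wl_eq_map_fst G, map_wl_eq_map_fst H, h])

end ColorRefinement

lemma Nat.add_one_mod_eq_or {x n : ℕ} (hx : x < n) :
    (x + 1) % n = x + 1 ∨ x + 1 = n ∧ (x + 1) % n = 0 := by
  rcases (Nat.succ_le_of_lt hx).lt_or_eq with h | h
  · exact .inl (Nat.mod_eq_of_lt h)
  · exact .inr ⟨h, h ▸ Nat.mod_self _⟩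

lemma cyc_eq_cycleGraph_adj (n : ℕ) : cyc n = (cycleGraph n).Adj := by
  ext i j
  match n with
  | 0 => exact i.elim0
  | 1 => simp [cyc, Subsingleton.elim i j]
  | n + 2 =>
    rw [cycleGraph_adj, sub_eq_iff_eq_add, sub_eq_iff_eq_add, cyc]
    simp only [Fin.ext_iff, Fin.val_add, Fin.val_one, add_comm (1 : ℕ)]
    have := Nat.add_one_mod_eq_or i.isLt
    have := Nat.add_one_mod_eq_or j.isLt
    omega

lemma card_filter_cyc {n : ℕ} (hn : 3 ≤ n) (i : Fin n) : #{j | cyc n i j} = 2 := by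
  obtain ⟨n, rfl⟩ : ∃ n', n = n' + 3 := ⟨n - 3, by omega⟩
  simp only [cyc_eq_cycleGraph_adj, ← neighborFinset_eq_filter, card_neighborFinset_eq_degree]
  exact cycleGraph_degree_three_le

/-- Distance from `i` to the bridge endpoint `0` along the `n`-cycle. -/
def hubDist (n : ℕ) (i : Fin n) : ℕ := min i.val (n - i.val)

lemma hubDist_pos_iff {n : ℕ} {i : Fin n} : 0 < hubDist n i ↔ i.val ≠ 0 := by
  have := i.isLt
  unfold hubDist
  omega

lemma hubDist_le_of_cyc {n : ℕ} {i j : Fin n} (h : cyc n i j) :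
    hubDist n i ≤ hubDist n j + 1 := by
  have := Nat.add_one_mod_eq_or i.isLt
  have := Nat.add_one_mod_eq_or j.isLt
  simp only [cyc, hubDist, ne_eq, Fin.ext_iff] at h ⊢
  omega

lemma exists_cyc_hubDist_lt {n : ℕ} {i : Fin n} (hi : 0 < hubDist n i) :
    ∃ j, cyc n i j ∧ hubDist n j < hubDist n i := by
  have hin := i.isLt
  unfold hubDist at hi
  by_cases h : 2 * i.val ≤ n
  · refine ⟨⟨i - 1, by omega⟩, ⟨?_, .inr ?_⟩, ?_⟩ <;> simp only [hubDist, ne_eq, Fin.ext_iff]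
    · omega
    · rw [Nat.sub_add_cancel (by omega : 1 ≤ i.val)]
      exact Nat.mod_eq_of_lt hin
    · omega
  · have := Nat.add_one_mod_eq_or hin
    refine ⟨⟨(i + 1) % n, Nat.mod_lt _ (by omega)⟩, ⟨?_, .inl rfl⟩, ?_⟩ <;>
      simp only [hubDist, ne_eq, Fin.ext_iff] <;> omega

lemma card_filter_lt_hubDist (n k : ℕ) : #{i : Fin n | k < hubDist n i} = n - (2 * k + 1) := by
  have h_image : (univ.filter fun i : Fin n => k < hubDist n i).map Fin.valEmbedding =
      Ico (k + 1) (n - k) := by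
    ext x
    simp only [mem_map, mem_filter, mem_univ, true_and, Fin.valEmbedding_apply, mem_Ico]
    unfold hubDist
    exact ⟨by rintro ⟨i, hi, rfl⟩; omega, fun hx => ⟨⟨x, by omega⟩, by dsimp only; omega, rfl⟩⟩
  rw [← card_map, h_image, Nat.card_Ico]
  omega

lemma card_filter_and_val_eq_zero {m : ℕ} (hm : 0 < m) (p : Prop) [Decidable p] :
    #{j : Fin m | p ∧ j.val = 0} = 0 ↔ ¬p := by
  simp only [card_eq_zero, filter_eq_empty_iff, mem_univ, true_implies, not_and]
  exact ⟨fun h hp => h (x := ⟨0, hm⟩) hp rfl, fun h j hp => absurd hp h⟩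

namespace Cgraph

variable {n m : ℕ}

@[simp] lemma adj_inl_inl {i j : Fin n} : (Cgraph n m).Adj (.inl i) (.inl j) ↔ cyc n i j := by
  simp [Cgraph, cAdj]

@[simp] lemma adj_inr_inr {i j : Fin m} : (Cgraph n m).Adj (.inr i) (.inr j) ↔ cyc m i j := by
  simp [Cgraph, cAdj]

@[simp] lemma adj_inl_inr {i : Fin n} {j : Fin m} :
    (Cgraph n m).Adj (.inl i) (.inr j) ↔ i.val = 0 ∧ j.val = 0 := by
  simp [Cgraph, cAdj]

@[simp] lemma adj_inr_inl {i : Fin m} {j : Fin n} :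
    (Cgraph n m).Adj (.inr i) (.inl j) ↔ i.val = 0 ∧ j.val = 0 := by
  simp [Cgraph, cAdj]

lemma neighborFinset_inl (i : Fin n) :
    (Cgraph n m).neighborFinset (.inl i) =
      Finset.disjSum {j | cyc n i j} {j : Fin m | i.val = 0 ∧ j.val = 0} := by
  ext (j | j) <;> simp

lemma neighborFinset_inr (i : Fin m) :
    (Cgraph n m).neighborFinset (.inr i) =
      Finset.disjSum {j : Fin n | i.val = 0 ∧ j.val = 0} {j | cyc m i j} := by
  ext (j | j) <;> simp

lemma isDistToDegreeNeTwo_hubDist (hn : 3 ≤ n) (hm : 3 ≤ m) :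
    IsDistToDegreeNeTwo (Cgraph n m) (Sum.elim (hubDist n) (hubDist m)) where
  degree_eq_two_iff
    | .inl i => by
      rw [degree, neighborFinset_inl, card_disjSum, card_filter_cyc hn, Sum.elim_inl,
        hubDist_pos_iff, ne_eq, ← card_filter_and_val_eq_zero (by omega : 0 < m)]
      omega
    | .inr i => by
      rw [degree, neighborFinset_inr, card_disjSum, card_filter_cyc hm, Sum.elim_inr,
        hubDist_pos_iff, ne_eq, ← card_filter_and_val_eq_zero (by omega : 0 < n)]
      omega
  le_add_one_of_adj
    | .inl _, .inl _, h => hubDist_le_of_cyc (adj_inl_inl.mp h)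
    | .inr _, .inr _, h => hubDist_le_of_cyc (adj_inr_inr.mp h)
    | .inl _, .inr _, h => by simp [hubDist, (adj_inl_inr.mp h).1]
    | .inr _, .inl _, h => by simp [hubDist, (adj_inr_inl.mp h).1]
  exists_adj_lt
    | .inl _, hi =>
      let ⟨j, hij, hlt⟩ := exists_cyc_hubDist_lt hi
      ⟨.inl j, adj_inl_inl.mpr hij, hlt⟩
    | .inr _, hi =>
      let ⟨j, hij, hlt⟩ := exists_cyc_hubDist_lt hi
      ⟨.inr j, adj_inr_inr.mpr hij, hlt⟩

lemma count_cycleColor (hn : 3 ≤ n) (hm : 3 ≤ m) (k : ℕ) :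
    (univ.val.map (wl (Cgraph n m) k)).count (cycleColor k) =
      (n - (2 * k + 1)) + (m - (2 * k + 1)) := by
  rw [count_cycleColor_eq_card _ (isDistToDegreeNeTwo_hubDist hn hm), card_filter,
    Fintype.sum_sum_type, ← card_filter, ← card_filter]
  exact congrArg₂ (· + ·) (card_filter_lt_hubDist n k) (card_filter_lt_hubDist m k)

end Cgraph

theorem WL_distinguishes_general (a b c d : ℕ) (ha : 4 < a) (hac : a < c) (hcd : c < d)
    (hsum : a + b = c + d) :
    Finset.univ.val.map (wl (Cgraph a b) a)
      ≠ Finset.univ.val.map (wl (Cgraph c d) a) := by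
  intro h
  have h_round := wl_multiset_eq_of_le _ _ (show (a + 1) / 2 ≤ a by omega) h
  have h_count := congrArg (Multiset.count (cycleColor ((a + 1) / 2))) h_round
  rw [Cgraph.count_cycleColor (by omega) (by omega),
    Cgraph.count_cycleColor (by omega) (by omega)] at h_count
  omega

theorem WL_distinguishes (a b c d : ℕ) (ha : 4 < a) (hac : a < c) (hcd : c < d)
    (hdb : d < b) (hsum : a + b = c + d) :
    Finset.univ.val.map (wl (Cgraph a b) a)
      ≠ Finset.univ.val.map (wl (Cgraph c d) a) :=
  WL_distinguishes_general a b c d ha hac hcd hsum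
end

section
/- In the graph C_{a,b} with 4 < a < b, the vertex of degree 3 on the cycle of length a receives, at round a of color refinement initialized with vertex degrees, a color different from the colors of both degree-3 vertices of C_{c,d} for any c,d with a < c < d and c+d = a+b; consequently a message-passing GNN of depth a with injective aggregation distinguishes C_{a,b} from C_{c,d}. -/
namespace SimpleGraph

variable {V W : Type*} [Fintype V] [Fintype W]

/-- `G.HasNBWalk δ k v u`: some non-backtracking walk of length `k` starts at `v`, ends at a
vertex of degree `δ`, and has first step different from `u` (the vertex the walk came from). -/
def HasNBWalk (G : SimpleGraph V) [DecidableRel G.Adj] (δ : ℕ) : ℕ → V → V → Prop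
  | 0, v, _ => G.degree v = δ
  | k + 1, v, u => ∃ w, G.Adj v w ∧ w ≠ u ∧ G.HasNBWalk δ k w v

def HasNBWalkFrom (G : SimpleGraph V) [DecidableRel G.Adj] (δ k : ℕ) (v : V) : Prop :=
  ∃ w, G.Adj v w ∧ G.HasNBWalk δ k w v

variable {G : SimpleGraph V} [DecidableRel G.Adj] {H : SimpleGraph W} [DecidableRel H.Adj]
  {δ : ℕ}

lemma hasNBWalk_succ_iff_of_adj_iff {k : ℕ} {u v w : V} (hv : ∀ x, G.Adj v x ↔ x = u ∨ x = w)
    (huw : u ≠ w) : G.HasNBWalk δ (k + 1) v u ↔ G.HasNBWalk δ k w v := by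
  simp only [HasNBWalk, hv]
  constructor
  · rintro ⟨x, rfl | rfl, hne, h⟩
    exacts [absurd rfl hne, h]
  · exact fun h => ⟨w, Or.inr rfl, huw.symm, h⟩

lemma hasNBWalk_along_path {k : ℕ} (p : ℕ → V)
    (hadj : ∀ t < k, ∀ x, G.Adj (p (t + 1)) x ↔ x = p t ∨ x = p (t + 2))
    (hne : ∀ t < k, p t ≠ p (t + 2)) :
    G.HasNBWalk δ k (p 1) (p 0) ↔ G.degree (p (k + 1)) = δ := by
  induction k generalizing p with
  | zero => rfl
  | succ k ih =>
    rw [hasNBWalk_succ_iff_of_adj_iff (hadj 0 k.succ_pos) (hne 0 k.succ_pos)]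
    exact ih (fun t => p (t + 1)) (fun t ht => hadj (t + 1) (by omega))
      (fun t ht => hne (t + 1) (by omega))

lemma HasNBWalk.map_iso (e : G ≃g H) :
    ∀ {k : ℕ} {v u : V}, G.HasNBWalk δ k v u → H.HasNBWalk δ k (e v) (e u)
  | 0, v, _, h => (e.degree_eq v).trans h
  | _ + 1, _, _, ⟨w, hw, hwu, h⟩ => ⟨e w, e.map_adj_iff.2 hw, e.injective.ne hwu, h.map_iso e⟩

lemma HasNBWalkFrom.map_iso (e : G ≃g H) {k : ℕ} {v : V} (h : G.HasNBWalkFrom δ k v) :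
    H.HasNBWalkFrom δ k (e v) :=
  let ⟨w, hw, hwalk⟩ := h
  ⟨e w, e.map_adj_iff.2 hw, hwalk.map_iso e⟩

end SimpleGraph

section WL

open SimpleGraph

variable {V W : Type*} [Fintype V] [DecidableEq V] [Fintype W] [DecidableEq W]
  {G : SimpleGraph V} [DecidableRel G.Adj] {H : SimpleGraph W} [DecidableRel H.Adj]

lemma exists_adj_wl_eq_of_wl_succ_eq {k : ℕ} {v w : V} {v' : W}
    (hv : wl G (k + 1) v = wl H (k + 1) v') (hw : G.Adj v w) :
    ∃ w', H.Adj v' w' ∧ wl H k w' = wl G k w := by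
  have hN : (G.neighborFinset v).val.map (wl G k) = (H.neighborFinset v').val.map (wl H k) :=
    congrArg Prod.snd hv
  have hmem : wl G k w ∈ (H.neighborFinset v').val.map (wl H k) :=
    hN ▸ Multiset.mem_map_of_mem _ (by simpa using hw)
  simpa using hmem

lemma exists_adj_ne_wl_eq_of_wl_succ_eq {k : ℕ} {v u w : V} {v' u' : W}
    (hv : wl G (k + 1) v = wl H (k + 1) v') (hu : G.Adj v u) (hu' : H.Adj v' u')
    (huu : wl G k u = wl H k u') (hw : G.Adj v w) (hwu : w ≠ u) :
    ∃ w', H.Adj v' w' ∧ w' ≠ u' ∧ wl H k w' = wl G k w := by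
  classical
  have hN : (G.neighborFinset v).val.map (wl G k) = (H.neighborFinset v').val.map (wl H k) :=
    congrArg Prod.snd hv
  have hmem : wl G k w ∈ ((G.neighborFinset v).val.map (wl G k)).erase (wl G k u) := by
    rw [← Multiset.map_erase_of_mem _ _ (by simpa using hu)]
    exact Multiset.mem_map_of_mem _ ((Multiset.mem_erase_of_ne hwu).2 (by simpa using hw))
  rw [hN, huu, ← Multiset.map_erase_of_mem _ _ (by simpa using hu'), ← Finset.erase_val] at hmem
  obtain ⟨w', hw', hww⟩ := Multiset.mem_map.1 hmem
  obtain ⟨hwu', hw'⟩ := Finset.mem_erase.1 hw'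
  exact ⟨w', (mem_neighborFinset _ _ _).1 hw', hwu', hww⟩

lemma SimpleGraph.HasNBWalk.of_wl_eq {δ : ℕ} :
    ∀ (k : ℕ) {v u : V} {v' u' : W}, G.Adj v u → H.Adj v' u' →
      wl G (k + 1) v = wl H (k + 1) v' → wl G k u = wl H k u' →
      G.HasNBWalk δ (k + 1) v u → H.HasNBWalk δ (k + 1) v' u' := by
  rintro k v u v' u' hu hu' hv huu ⟨w, hw, hwu, hwalk⟩
  obtain ⟨w', hw', hwu', hww⟩ := exists_adj_ne_wl_eq_of_wl_succ_eq hv hu hu' huu hw hwu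
  refine ⟨w', hw', hwu', ?_⟩
  cases k with
  | zero => exact hww.trans hwalk
  | succ k => exact of_wl_eq k hw.symm hw'.symm hww.symm (congrArg (·.1.1) hv) hwalk

lemma SimpleGraph.HasNBWalkFrom.of_wl_eq {δ k : ℕ} {v : V} {v' : W}
    (hv : wl G (k + 2) v = wl H (k + 2) v') (h : G.HasNBWalkFrom δ (k + 1) v) :
    H.HasNBWalkFrom δ (k + 1) v' := by
  obtain ⟨w, hw, hwalk⟩ := h
  obtain ⟨w', hw', hww⟩ := exists_adj_wl_eq_of_wl_succ_eq hv hw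
  exact ⟨w', hw', hwalk.of_wl_eq k hw.symm hw'.symm hww.symm (congrArg (·.1.1) hv)⟩

end WL

lemma cyc_iff {n : ℕ} [NeZero n] (hn : 1 < n) {i j : Fin n} :
    cyc n i j ↔ j = i + 1 ∨ j = i - 1 := by
  have hval : ∀ x y : Fin n, (x.val + 1) % n = y.val ↔ x + 1 = y := fun x y => by
    rw [Fin.ext_iff, Fin.val_add, Fin.val_one', Nat.one_mod_eq_one.2 hn.ne']
  have hone : (1 : Fin n) ≠ 0 := fun h => by
    simp [Fin.ext_iff, Nat.one_mod_eq_one.2 hn.ne'] at h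
  rw [cyc, hval, hval, eq_sub_iff_add_eq, eq_comm (a := i + 1)]
  refine ⟨fun h => h.2, ?_⟩
  rintro (rfl | rfl)
  · exact ⟨fun h => hone (by simpa using h.symm), Or.inl rfl⟩
  · exact ⟨fun h => hone (by simpa using h), Or.inr rfl⟩

open Fin.NatCast in
lemma Fin.natCast_ne_zero_of_lt {n t : ℕ} [NeZero n] (ht : 0 < t) (htn : t < n) :
    (t : Fin n) ≠ 0 := by
  rw [Ne, Fin.natCast_eq_zero]
  exact Nat.not_dvd_of_pos_of_lt ht htn

namespace Cgraph

open Fin.CommRing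

variable {n m : ℕ}

lemma adj_inl_iff [NeZero n] [NeZero m] (hn : 1 < n) {i : Fin n} {x : Fin n ⊕ Fin m} :
    (Cgraph n m).Adj (.inl i) x ↔ x = .inl (i + 1) ∨ x = .inl (i - 1) ∨ (i = 0 ∧ x = .inr 0) := by
  rcases x with j | j <;> simp [Cgraph, cAdj, cyc_iff hn, Fin.val_eq_zero_iff]

lemma adj_inl_zero_iff [NeZero n] [NeZero m] (hn : 1 < n) {x : Fin n ⊕ Fin m} :
    (Cgraph n m).Adj (.inl 0) x ↔ (∃ ε : Fin n, (ε = 1 ∨ ε = -1) ∧ x = .inl ε) ∨ x = .inr 0 := by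
  rcases x with j | j <;> simp [Cgraph, cAdj, cyc_iff hn, Fin.val_eq_zero_iff]

lemma adj_inr_zero_iff [NeZero n] [NeZero m] (hm : 1 < m) {x : Fin n ⊕ Fin m} :
    (Cgraph n m).Adj (.inr 0) x ↔ (∃ ε : Fin m, (ε = 1 ∨ ε = -1) ∧ x = .inr ε) ∨ x = .inl 0 := by
  rcases x with j | j <;> simp [Cgraph, cAdj, cyc_iff hm, Fin.val_eq_zero_iff]

def swapIso : Cgraph n m ≃g Cgraph m n where
  toEquiv := Equiv.sumComm _ _
  map_rel_iff' := by
    rintro (i | i) (j | j) <;> simp [Cgraph, cAdj]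

lemma degree_inl_eq_three_iff [NeZero n] [NeZero m] (hn : 2 < n) {i : Fin n} :
    (Cgraph n m).degree (.inl i) = 3 ↔ i = 0 := by
  have hn1 : 1 < n := by omega
  have htwo : (2 : Fin n) ≠ 0 := by exact_mod_cast Fin.natCast_ne_zero_of_lt two_pos hn
  rw [← SimpleGraph.card_neighborFinset_eq_degree]
  rcases eq_or_ne i 0 with rfl | hi
  · have hN : (Cgraph n m).neighborFinset (.inl 0) = {.inl 1, .inl (-1), .inr 0} := by
      ext x; simp [adj_inl_iff hn1]
    have h1 : (1 : Fin n) ≠ -1 := fun h => htwo (by linear_combination h)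
    simp [hN, h1]
  · have hN : (Cgraph n m).neighborFinset (.inl i) = {.inl (i + 1), .inl (i - 1)} := by
      ext x; simp [adj_inl_iff hn1, hi]
    simp only [hN, hi, iff_false]
    exact (Finset.card_le_two.trans_lt (by norm_num)).ne

lemma hasNBWalk_inl_iff [NeZero n] [NeZero m] (hn : 2 < n) {ε : Fin n} (hε : ε = 1 ∨ ε = -1)
    {k : ℕ} (hk : k < n) : (Cgraph n m).HasNBWalk 3 k (.inl ε) (.inl 0) ↔ k + 1 = n := by
  have hu : IsUnit ε := by rcases hε with rfl | rfl <;> simp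
  have hpath := SimpleGraph.hasNBWalk_along_path (G := Cgraph n m) (δ := 3) (k := k)
    (fun t => .inl (ε * t)) ?_ ?_
  · simp only [Nat.cast_one, mul_one, Nat.cast_zero, mul_zero] at hpath
    rw [hpath, degree_inl_eq_three_iff hn, hu.mul_right_eq_zero, Fin.natCast_eq_zero]
    exact ⟨fun h => le_antisymm (by omega) (Nat.le_of_dvd k.succ_pos h), fun h => h ▸ dvd_rfl⟩
  · intro t ht x
    have hne : ε * (t + 1 : ℕ) ≠ 0 := by
      rw [Ne, hu.mul_right_eq_zero]
      exact Fin.natCast_ne_zero_of_lt t.succ_pos (by omega)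
    rw [adj_inl_iff (by omega)]
    simp only [hne, false_and, or_false]
    rcases hε with rfl | rfl
    · rw [or_comm]; push_cast; ring_nf
    · push_cast; ring_nf
  · intro t ht h
    have htwo : (2 : Fin n) ≠ 0 := by exact_mod_cast Fin.natCast_ne_zero_of_lt two_pos hn
    simp only [Sum.inl.injEq, hu.mul_right_inj] at h
    push_cast at h
    exact htwo (by linear_combination -h)

lemma hasNBWalkFrom_inl_zero [NeZero n] [NeZero m] (hn : 2 < n) {k : ℕ} (hk : k + 2 = n) :
    (Cgraph n m).HasNBWalkFrom 3 (k + 1) (.inl 0) :=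
  ⟨.inl 1, (adj_inl_zero_iff (by omega)).2 (.inl ⟨1, .inl rfl, rfl⟩),
    (hasNBWalk_inl_iff hn (.inl rfl) (by omega)).2 (by omega)⟩

lemma not_hasNBWalkFrom_inl_zero [NeZero n] [NeZero m] {k : ℕ} (hn : k + 2 < n)
    (hm : k + 2 < m) : ¬ (Cgraph n m).HasNBWalkFrom 3 (k + 1) (.inl 0) := by
  rintro ⟨w, hw, hwalk⟩
  obtain ⟨ε, hε, rfl⟩ | rfl := (adj_inl_zero_iff (by omega)).1 hw
  · have := (hasNBWalk_inl_iff (by omega) hε (by omega)).1 hwalk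
    omega
  · obtain ⟨x, hx, hxne, hwalk'⟩ := hwalk
    obtain ⟨ε, hε, rfl⟩ | rfl := (adj_inr_zero_iff (by omega)).1 hx
    · have := (hasNBWalk_inl_iff (by omega) hε (by omega)).1 (hwalk'.map_iso swapIso)
      omega
    · exact absurd rfl hxne

lemma not_hasNBWalkFrom_inr_zero [NeZero n] [NeZero m] {k : ℕ} (hn : k + 2 < n)
    (hm : k + 2 < m) : ¬ (Cgraph n m).HasNBWalkFrom 3 (k + 1) (.inr 0) :=
  fun h => not_hasNBWalkFrom_inl_zero hm hn (h.map_iso swapIso)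

end Cgraph

theorem WL_color_of_degree_three_vertex_differs (a b c d : ℕ)
    (ha : 4 < a) (hab : a < b) (hac : a < c) (hcd : c < d) :
    wl (Cgraph a b) a (Sum.inl ⟨0, by omega⟩)
        ≠ wl (Cgraph c d) a (Sum.inl ⟨0, by omega⟩) ∧
    wl (Cgraph a b) a (Sum.inl ⟨0, by omega⟩)
        ≠ wl (Cgraph c d) a (Sum.inr ⟨0, by omega⟩) := by
  obtain ⟨k, rfl⟩ : ∃ k, a = k + 2 := ⟨a - 2, by omega⟩
  have : NeZero b := ⟨by omega⟩
  have : NeZero c := ⟨by omega⟩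
  have : NeZero d := ⟨by omega⟩
  have hwalk : (Cgraph (k + 2) b).HasNBWalkFrom 3 (k + 1) (.inl 0) :=
    Cgraph.hasNBWalkFrom_inl_zero (by omega) rfl
  exact ⟨fun h => Cgraph.not_hasNBWalkFrom_inl_zero (by omega) (by omega) (hwalk.of_wl_eq h),
    fun h => Cgraph.not_hasNBWalkFrom_inr_zero (by omega) (by omega) (hwalk.of_wl_eq h)⟩
end
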